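/- arXiv:2107.04514 — 2 statements merged into one kernel-verified Lean document; each statement's English description precedes it below -/
import Mathlib

section
/- Let ℓ ∈ C^∞[0,T] satisfy ℓ(t) > 0 for 0 < t < T, ℓ(t) = t for 0 ≤ t ≤ T/4, ℓ symmetric about t₀ = T/2, and ℓ(t₀) > ℓ(t) for t ≠ t₀. Then for any constants μ, C > 0 and s ≥ 1, the integral ∫₀^T ℓ(t)^{-8} exp(−μ s (ℓ(t₀)^8 − ℓ(t)^8)/ℓ(t)^8) dt is finite and bounded uniformly in s ≥ 1. -/
open Real MeasureTheory Set

/-- Partial derivative `∂ᵢ f` of a scalar function on `ℝ³`. -/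
noncomputable def pd (i : Fin 3) (f : (Fin 3 → ℝ) → ℝ) (x : Fin 3 → ℝ) : ℝ :=
  fderiv ℝ f x (Pi.single i 1)

/-- Divergence of a vector field on `ℝ³`. -/
noncomputable def div3 (v : (Fin 3 → ℝ) → (Fin 3 → ℝ)) (x : Fin 3 → ℝ) : ℝ :=
  ∑ i, pd i (fun y => v y i) x

/-- Curl (rot) of a vector field on `ℝ³`. -/
noncomputable def curl3 (v : (Fin 3 → ℝ) → (Fin 3 → ℝ)) (x : Fin 3 → ℝ) : Fin 3 → ℝ :=
  ![pd 1 (fun y => v y 2) x - pd 2 (fun y => v y 1) x,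
    pd 2 (fun y => v y 0) x - pd 0 (fun y => v y 2) x,
    pd 0 (fun y => v y 1) x - pd 1 (fun y => v y 0) x]

/-- Cross product on `ℝ³`. -/
def cross3 (a b : Fin 3 → ℝ) : Fin 3 → ℝ :=
  ![a 1 * b 2 - a 2 * b 1, a 2 * b 0 - a 0 * b 2, a 0 * b 1 - a 1 * b 0]

/-- Gradient of a scalar function on `ℝ³`. -/
noncomputable def grad3 (g : (Fin 3 → ℝ) → ℝ) (x : Fin 3 → ℝ) : Fin 3 → ℝ :=
  fun i => pd i g x

/-- Componentwise Laplacian of a vector field on `ℝ³`. -/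
noncomputable def lap3 (v : (Fin 3 → ℝ) → (Fin 3 → ℝ)) (x : Fin 3 → ℝ) : Fin 3 → ℝ :=
  fun i => ∑ j, pd j (fun y => pd j (fun z => v z i) y) x

/-- Euclidean norm on `ℝ³` (as `Fin 3 → ℝ`). -/
noncomputable def enorm3 (a : Fin 3 → ℝ) : ℝ :=
  Real.sqrt (∑ i, (a i) ^ 2)


lemma key_exp_bound (a x : ℝ) (ha : 0 < a) (hx : 0 < x) :
    x * Real.exp (-(a * x)) ≤ 1 / a := by
  have h1 : a * x ≤ Real.exp (a * x) := by
    have := Real.add_one_le_exp (a * x); linarith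
  have hex : 0 < Real.exp (a * x) := Real.exp_pos _
  rw [Real.exp_neg, mul_inv_le_iff₀ hex, div_mul_eq_mul_div, le_div_iff₀ ha]
  nlinarith

/-- Uniform-in-`s` finiteness of the singular-weight time integral:
`∫₀ᵀ ℓ(t)⁻⁸ exp (-μ s (ℓ(t₀)⁸ - ℓ(t)⁸) / ℓ(t)⁸) dt` is finite and bounded
uniformly for `s ≥ 1`, where `t₀ = T/2`. -/
theorem time_integral_uniformly_bounded (T : ℝ) (hT : 0 < T)
    (ℓ : ℝ → ℝ) (hℓ : ContDiffOn ℝ (⊤ : ℕ∞) ℓ (Icc 0 T))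
    (hpos : ∀ t ∈ Ioo 0 T, 0 < ℓ t)
    (hid : ∀ t ∈ Icc 0 (T / 4), ℓ t = t)
    (hsym : ∀ t ∈ Icc 0 T, ℓ (T - t) = ℓ t)
    (hmax : ∀ t ∈ Icc 0 T, t ≠ T / 2 → ℓ t < ℓ (T / 2))
    (μ : ℝ) (hμ : 0 < μ) :
    ∃ C > 0, ∀ s ≥ (1 : ℝ),
      IntegrableOn
        (fun t => 1 / (ℓ t) ^ 8 *
          Real.exp (-μ * s * ((ℓ (T / 2)) ^ 8 - (ℓ t) ^ 8) / (ℓ t) ^ 8))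
        (Ioo 0 T) ∧
      (∫ t in Ioo 0 T, 1 / (ℓ t) ^ 8 *
          Real.exp (-μ * s * ((ℓ (T / 2)) ^ 8 - (ℓ t) ^ 8) / (ℓ t) ^ 8)) ≤ C := by

  set L := ℓ (T / 2) with hLdef
  have hT2 : T / 2 ∈ Ioo 0 T := ⟨by linarith, by linarith⟩
  have hL : 0 < L := hpos _ hT2
  have hML : 0 < μ * L ^ 8 := by positivity
  set M := Real.exp μ * (1 / (μ * L ^ 8)) with hMdef
  have hM : 0 < M := by positivity
  refine ⟨M * T, by positivity, fun s hs => ?_⟩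
  set f : ℝ → ℝ := fun t => 1 / (ℓ t) ^ 8 *
      Real.exp (-μ * s * (L ^ 8 - (ℓ t) ^ 8) / (ℓ t) ^ 8) with hfdef
  -- pointwise bound
  have hbd : ∀ t ∈ Ioo 0 T, 0 ≤ f t ∧ f t ≤ M := by
    intro t ht
    have hℓt : 0 < ℓ t := hpos t ht
    have hp : 0 < (ℓ t) ^ 8 := by positivity
    have hle : ℓ t ≤ L := by
      rcases eq_or_ne t (T / 2) with h | h
      · rw [h]
      · exact (hmax t (Ioo_subset_Icc_self ht) h).le
    have hle8 : (ℓ t) ^ 8 ≤ L ^ 8 := pow_le_pow_left₀ hℓt.le hle 8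
    constructor
    · positivity
    · have hE : -μ * s * (L ^ 8 - (ℓ t) ^ 8) / (ℓ t) ^ 8 ≤
          μ + -(μ * L ^ 8 * (1 / (ℓ t) ^ 8)) := by
        rw [div_le_iff₀ hp]
        have h1 : μ * (L ^ 8 - (ℓ t) ^ 8) ≤ μ * s * (L ^ 8 - (ℓ t) ^ 8) := by
          nlinarith [mul_nonneg (mul_nonneg hμ.le (sub_nonneg.2 hs)) (sub_nonneg.2 hle8)]
        have h2 : μ * L ^ 8 * (1 / (ℓ t) ^ 8) * (ℓ t) ^ 8 = μ * L ^ 8 := by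
          field_simp
        nlinarith
      have := Real.exp_le_exp.2 hE
      rw [Real.exp_add] at this
      calc f t ≤ 1 / (ℓ t) ^ 8 * (Real.exp μ *
            Real.exp (-(μ * L ^ 8 * (1 / (ℓ t) ^ 8)))) := by
            exact mul_le_mul_of_nonneg_left this (by positivity)
        _ = Real.exp μ * ((1 / (ℓ t) ^ 8) *
            Real.exp (-(μ * L ^ 8 * (1 / (ℓ t) ^ 8)))) := by ring
        _ ≤ Real.exp μ * (1 / (μ * L ^ 8)) := by
            refine mul_le_mul_of_nonneg_left ?_ (Real.exp_pos μ).le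
            exact key_exp_bound _ _ hML (by positivity)
        _ = M := rfl
  -- continuity / measurability
  have hcℓ : ContinuousOn ℓ (Ioo 0 T) := hℓ.continuousOn.mono Ioo_subset_Icc_self
  have hne : ∀ t ∈ Ioo 0 T, (ℓ t) ^ 8 ≠ 0 := fun t ht => pow_ne_zero _ (hpos t ht).ne'
  have hcont : ContinuousOn f (Ioo 0 T) := by
    apply ContinuousOn.mul
    · exact continuousOn_const.div (hcℓ.pow 8) hne
    · exact Real.continuous_exp.comp_continuousOn
        ((continuousOn_const.mul (continuousOn_const.sub (hcℓ.pow 8))).div (hcℓ.pow 8) hne)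
  have hmeas : AEStronglyMeasurable f (volume.restrict (Ioo 0 T)) :=
    hcont.aestronglyMeasurable measurableSet_Ioo
  have hvol : volume (Ioo (0 : ℝ) T) ≠ ⊤ := by
    rw [Real.volume_Ioo]; exact ENNReal.ofReal_ne_top
  have hbound_ae : ∀ᵐ t ∂volume.restrict (Ioo 0 T), ‖f t‖ ≤ M := by
    filter_upwards [ae_restrict_mem measurableSet_Ioo] with t ht
    rw [Real.norm_eq_abs, abs_of_nonneg (hbd t ht).1]
    exact (hbd t ht).2
  have hint : IntegrableOn f (Ioo 0 T) := by
    refine Integrable.mono' (integrableOn_const (ne_of_lt ?_)) hmeas hbound_ae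
    rw [Real.volume_Ioo]; exact ENNReal.ofReal_lt_top
  refine ⟨hint, ?_⟩
  calc (∫ t in Ioo 0 T, f t) ≤ ∫ _ in Ioo 0 T, M := by
        refine setIntegral_mono_on hint (integrableOn_const (ne_of_lt ?_))
          measurableSet_Ioo (fun t ht => (hbd t ht).2)
        rw [Real.volume_Ioo]; exact ENNReal.ofReal_lt_top
    _ = M * T := by
        rw [setIntegral_const, measureReal_def, Real.volume_Ioo, smul_eq_mul,
          ENNReal.toReal_ofReal (by linarith), sub_zero, mul_comm]
end

section
/- With α(x,t) = (e^{λη(x)} − e^{2λ‖η‖_∞})/ℓ(t)^8 and φ(x,t) = e^{λη(x)}/ℓ(t)^8 (η continuous, bounded, η > 0 in Ω, ℓ as in the weight construction), for every g ∈ L¹(Ω) there is a constant C > 0, independent of g and of s ≥ 1, such that ∫₀^T∫_Ω φ(x,t)|g(x)| e^{2sα(x,t)} dx dt ≤ C ∫_Ω |g(x)| e^{2sα(x,t₀)} dx. -/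
open Real MeasureTheory Set

lemma ve_aux (v : ℝ) (hv : 0 ≤ v) : v * Real.exp (-v) ≤ Real.exp (-1) := by
  have h := Real.add_one_le_exp (v - 1)
  calc v * Real.exp (-v) ≤ Real.exp (v - 1) * Real.exp (-v) := by
        apply mul_le_mul_of_nonneg_right _ (Real.exp_nonneg _)
        linarith
    _ = Real.exp (-1) := by rw [← Real.exp_add]; ring_nf

lemma key_aux (A B c m L s : ℝ) (hA : 0 < A) (hc : 0 < c) (hD : c ≤ B - A)
    (hm : 0 < m) (hmL : m ≤ L) (hs : 1 ≤ s) :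
    A / m ^ 8 * Real.exp (2 * s * ((A - B) / m ^ 8)) ≤
      A * (1 / L ^ 8 + 1 / (2 * c * Real.exp 1)) * Real.exp (2 * s * ((A - B) / L ^ 8)) := by
  have hL : 0 < L := lt_of_lt_of_le hm hmL
  have hm8 : 0 < m ^ 8 := by positivity
  have hL8 : 0 < L ^ 8 := by positivity
  have hmL8 : m ^ 8 ≤ L ^ 8 := pow_le_pow_left₀ hm.le hmL 8
  set u := 1 / m ^ 8 - 1 / L ^ 8 with hu
  have hu0 : 0 ≤ u := by
    have : 1 / L ^ 8 ≤ 1 / m ^ 8 := one_div_le_one_div_of_le hm8 hmL8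
    rw [hu]; linarith
  have hsplit : 2 * s * ((A - B) / m ^ 8) =
      2 * s * ((A - B) / L ^ 8) + 2 * s * ((A - B) * u) := by
    rw [hu]; field_simp; ring
  rw [hsplit, Real.exp_add]
  have hexp2 : Real.exp (2 * s * ((A - B) * u)) ≤ Real.exp (-(2 * c * u)) := by
    apply Real.exp_le_exp.2
    have h1 : (A - B) * u ≤ -c * u := mul_le_mul_of_nonneg_right (by linarith) hu0
    nlinarith [mul_nonneg hc.le hu0]
  have hmain : A / m ^ 8 * Real.exp (-(2 * c * u)) ≤
      A * (1 / L ^ 8 + 1 / (2 * c * Real.exp 1)) := by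
    have hue : u * Real.exp (-(2 * c * u)) ≤ 1 / (2 * c * Real.exp 1) := by
      have h2 := ve_aux (2 * c * u) (by positivity)
      have h2c : (0:ℝ) < 2 * c := by linarith
      calc u * Real.exp (-(2 * c * u))
          = (2 * c * u * Real.exp (-(2 * c * u))) / (2 * c) := by field_simp
        _ ≤ Real.exp (-1) / (2 * c) := by gcongr
        _ = 1 / (2 * c * Real.exp 1) := by
            rw [Real.exp_neg]; field_simp
    have he1 : Real.exp (-(2 * c * u)) ≤ 1 := Real.exp_le_one_iff.2 (by nlinarith)
    have hrw : A / m ^ 8 = A * u + A * (1 / L ^ 8) := by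
      rw [hu]; field_simp; ring
    calc A / m ^ 8 * Real.exp (-(2 * c * u))
        = A * (u * Real.exp (-(2 * c * u))) + A * (1 / L ^ 8) * Real.exp (-(2 * c * u)) := by
          rw [hrw]; ring
      _ ≤ A * (1 / (2 * c * Real.exp 1)) + A * (1 / L ^ 8) * 1 := by
          gcongr
      _ = A * (1 / L ^ 8 + 1 / (2 * c * Real.exp 1)) := by ring
  calc A / m ^ 8 * (Real.exp (2 * s * ((A - B) / L ^ 8)) * Real.exp (2 * s * ((A - B) * u)))
      ≤ A / m ^ 8 * (Real.exp (2 * s * ((A - B) / L ^ 8)) * Real.exp (-(2 * c * u))) := by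
        gcongr
    _ = (A / m ^ 8 * Real.exp (-(2 * c * u))) * Real.exp (2 * s * ((A - B) / L ^ 8)) := by ring
    _ ≤ A * (1 / L ^ 8 + 1 / (2 * c * Real.exp 1)) * Real.exp (2 * s * ((A - B) / L ^ 8)) := by
        gcongr

/-- Key weighted estimate (Lemma 3): with `α(x,t) = (e^{λη(x)} - e^{2λN}) / ℓ(t)⁸`
and `φ(x,t) = e^{λη(x)} / ℓ(t)⁸`, for every `g ∈ L¹(Ω)`,
`∫_Q φ |g| e^{2sα} dx dt ≤ C ∫_Ω |g| e^{2sα(·,t₀)} dx`, with `C` independent of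
`g` and of `s ≥ 1`; here `t₀ = T/2`. -/
theorem weight_in_time_estimate (Ω : Set (Fin 3 → ℝ)) (hΩb : Bornology.IsBounded Ω)
    (T lam N : ℝ) (hT : 0 < T) (hlam : 0 < lam)
    (η : (Fin 3 → ℝ) → ℝ) (hη : ContinuousOn η (closure Ω))
    (hη0 : ∀ x ∈ Ω, 0 < η x) (hηN : ∀ x ∈ closure Ω, η x ≤ N)
    (ℓ : ℝ → ℝ) (hℓ : ContDiffOn ℝ (⊤ : ℕ∞) ℓ (Icc 0 T))
    (hpos : ∀ t ∈ Ioo 0 T, 0 < ℓ t)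
    (hid : ∀ t ∈ Icc 0 (T / 4), ℓ t = t)
    (hsym : ∀ t ∈ Icc 0 T, ℓ (T - t) = ℓ t)
    (hmax : ∀ t ∈ Icc 0 T, t ≠ T / 2 → ℓ t < ℓ (T / 2)) :
    ∃ C > 0, ∀ g : (Fin 3 → ℝ) → ℝ, IntegrableOn g Ω → ∀ s ≥ (1 : ℝ),
      (∫ t in Ioo 0 T, ∫ x in Ω,
          (Real.exp (lam * η x) / (ℓ t) ^ 8) * |g x| *
            Real.exp (2 * s * ((Real.exp (lam * η x) - Real.exp (2 * lam * N)) / (ℓ t) ^ 8)))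
        ≤ C * ∫ x in Ω, |g x| *
            Real.exp (2 * s * ((Real.exp (lam * η x) - Real.exp (2 * lam * N)) / (ℓ (T / 2)) ^ 8)) := by
  rcases Set.eq_empty_or_nonempty Ω with hΩe | ⟨x₀, hx₀⟩
  · exact ⟨1, one_pos, by intro g hg s hs; simp [hΩe]⟩
  have hN : 0 < N := lt_of_lt_of_le (hη0 x₀ hx₀) (hηN x₀ (subset_closure hx₀))
  set B := Real.exp (2 * lam * N) with hB
  set E := Real.exp (lam * N) with hE
  set c := B - E with hcdef
  have hc : 0 < c := by
    rw [hcdef, hB, hE]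
    have : lam * N < 2 * lam * N := by nlinarith
    have := Real.exp_lt_exp.2 this
    linarith
  have ht₀ : T / 2 ∈ Ioo 0 T := ⟨by linarith, by linarith⟩
  set L := ℓ (T / 2) with hLdef
  have hL : 0 < L := hpos _ ht₀
  set K := E * (1 / L ^ 8 + 1 / (2 * c * Real.exp 1)) with hKdef
  have hK : 0 < K := by positivity
  refine ⟨T * K, by positivity, ?_⟩
  intro g hg s hs
  have hmono : (volume : Measure (Fin 3 → ℝ)).restrict Ω ≤ volume.restrict (closure Ω) :=
    Measure.restrict_mono subset_closure le_rfl
  have haeΩ : ∀ᵐ x ∂((volume : Measure (Fin 3 → ℝ)).restrict Ω), x ∈ closure Ω :=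
    (ae_restrict_mem isClosed_closure.measurableSet).filter_mono (ae_mono hmono)
  -- the reference weight function
  set w : (Fin 3 → ℝ) → ℝ :=
    fun x => |g x| * Real.exp (2 * s * ((Real.exp (lam * η x) - B) / L ^ 8)) with hwdef
  have hw0 : ∀ x, 0 ≤ w x := fun x => by positivity
  set I₀ := ∫ x in Ω, w x with hI₀def
  have hI₀ : 0 ≤ I₀ := integral_nonneg hw0
  -- integrability of w on Ω
  have hwcont : ContinuousOn (fun x => Real.exp (2 * s * ((Real.exp (lam * η x) - B) / L ^ 8)))
      (closure Ω) := by
    apply Real.continuous_exp.comp_continuousOn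
    apply ContinuousOn.mul continuousOn_const
    apply ContinuousOn.div_const
    exact (Real.continuous_exp.comp_continuousOn (continuousOn_const.mul hη)).sub continuousOn_const
  have hwm : AEStronglyMeasurable w (volume.restrict Ω) := by
    apply AEStronglyMeasurable.mul (hg.abs).1
    exact (hwcont.aestronglyMeasurable isClosed_closure.measurableSet).mono_measure hmono
  have hwint : Integrable w (volume.restrict Ω) := by
    apply Integrable.mono' hg.abs hwm
    filter_upwards [haeΩ] with x hx
    rw [hwdef]
    have hexp1 : Real.exp (2 * s * ((Real.exp (lam * η x) - B) / L ^ 8)) ≤ 1 := by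
      apply Real.exp_le_one_iff.2
      have h1 : Real.exp (lam * η x) ≤ B := by
        rw [hB]; apply Real.exp_le_exp.2; nlinarith [hηN x hx]
      have : (Real.exp (lam * η x) - B) / L ^ 8 ≤ 0 :=
        div_nonpos_of_nonpos_of_nonneg (by linarith) (by positivity)
      nlinarith
    have : (0:ℝ) ≤ |g x| := abs_nonneg _
    rw [Real.norm_eq_abs, abs_of_nonneg (by positivity)]
    nlinarith
  -- the pointwise-in-t bound on the inner integral
  have hinner : ∀ t ∈ Ioo 0 T,
      (∫ x in Ω, (Real.exp (lam * η x) / (ℓ t) ^ 8) * |g x| *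
          Real.exp (2 * s * ((Real.exp (lam * η x) - B) / (ℓ t) ^ 8))) ≤ K * I₀ := by
    intro t ht
    have hm : 0 < ℓ t := hpos t ht
    have hmL : ℓ t ≤ L := by
      rcases eq_or_ne t (T / 2) with h | h
      · rw [h]
      · exact (hmax t ⟨ht.1.le, ht.2.le⟩ h).le
    set f : (Fin 3 → ℝ) → ℝ := fun x =>
      (Real.exp (lam * η x) / (ℓ t) ^ 8) * |g x| *
        Real.exp (2 * s * ((Real.exp (lam * η x) - B) / (ℓ t) ^ 8)) with hfdef
    by_cases hfi : Integrable f (volume.restrict Ω)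
    · have hle : f ≤ᵐ[volume.restrict Ω] fun x => K * w x := by
        filter_upwards [haeΩ] with x hx
        have hA : 0 < Real.exp (lam * η x) := Real.exp_pos _
        have hAE : Real.exp (lam * η x) ≤ E := by
          rw [hE]; exact Real.exp_le_exp.2 (by nlinarith [hηN x hx])
        have hD : c ≤ B - Real.exp (lam * η x) := by rw [hcdef]; linarith
        have hkey := key_aux (Real.exp (lam * η x)) B c (ℓ t) L s hA hc hD hm hmL hs
        have hg0 : (0:ℝ) ≤ |g x| := abs_nonneg _
        calc f x = (Real.exp (lam * η x) / (ℓ t) ^ 8 *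
              Real.exp (2 * s * ((Real.exp (lam * η x) - B) / (ℓ t) ^ 8))) * |g x| := by
              rw [hfdef]; ring
          _ ≤ (Real.exp (lam * η x) * (1 / L ^ 8 + 1 / (2 * c * Real.exp 1)) *
              Real.exp (2 * s * ((Real.exp (lam * η x) - B) / L ^ 8))) * |g x| := by
              gcongr
          _ ≤ (E * (1 / L ^ 8 + 1 / (2 * c * Real.exp 1)) *
              Real.exp (2 * s * ((Real.exp (lam * η x) - B) / L ^ 8))) * |g x| := by
              gcongr
          _ = K * w x := by rw [hKdef, hwdef]; ring
      calc (∫ x in Ω, f x) ≤ ∫ x in Ω, K * w x := integral_mono_ae hfi (hwint.const_mul K) hle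
        _ = K * I₀ := by rw [hI₀def, integral_const_mul]
    · rw [integral_undef hfi]
      exact mul_nonneg hK.le hI₀
  -- outer integral
  set F : ℝ → ℝ := fun t => ∫ x in Ω,
      (Real.exp (lam * η x) / (ℓ t) ^ 8) * |g x| *
        Real.exp (2 * s * ((Real.exp (lam * η x) - B) / (ℓ t) ^ 8)) with hFdef
  by_cases hFi : IntegrableOn F (Ioo 0 T) volume
  · have h1 : (∫ t in Ioo 0 T, F t) ≤ ∫ _t in Ioo 0 T, K * I₀ := by
      refine setIntegral_mono_on hFi ?_ measurableSet_Ioo hinner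
      exact integrableOn_const (by rw [Real.volume_Ioo]; exact ENNReal.ofReal_ne_top)
    have h2 : (∫ _t in Ioo 0 T, K * I₀) = T * K * I₀ := by
      rw [setIntegral_const, measureReal_def, Real.volume_Ioo, smul_eq_mul,
        ENNReal.toReal_ofReal (by linarith)]
      ring
    exact h1.trans_eq h2
  · rw [integral_undef hFi]
    exact mul_nonneg (mul_nonneg hT.le hK.le) hI₀
end
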